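/- Let n = 2k with k ≥ 1, and define p : {1,…,n} × {0,1} → ℝ by p(i, x) = 10^{1−i} · x for i ∈ {1,…,k} and p(i, x) = −10^{i−n} · x for i ∈ {k+1,…,n}. Then for every input x_1,…,x_n ∈ {0,1}, the uniform average (1/n) · Σ_{i=1}^{n} p(i, x_i) equals (1/n) · Σ_{j=1}^{k} 10^{1−j} (x_j − x_{n+1−j}); consequently this average is 0 if and only if x_1…x_n is a palindrome, i.e., x_j = x_{n+1−j} for all j ∈ {1,…,n}. -/
import Mathlib

open Finset

lemma digit_sum_bound (d : ℕ → ℤ) (m : ℕ) (hd : ∀ j < m, |d j| ≤ 1) :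
    |∑ j ∈ range m, d j * 10 ^ j| < 10 ^ m := by
  induction m with
  | zero => simp
  | succ m ih =>
    rw [sum_range_succ]
    have h1 : |∑ j ∈ range m, d j * 10 ^ j| < 10 ^ m :=
      ih (fun j hj => hd j (by omega))
    have h2 : |d m * 10 ^ m| ≤ 10 ^ m := by
      rw [abs_mul, abs_pow]
      have h10 : |(10:ℤ)| = 10 := by norm_num
      rw [h10]
      calc |d m| * (10:ℤ) ^ m ≤ 1 * 10 ^ m :=
            mul_le_mul_of_nonneg_right (hd m (by omega)) (by positivity)
        _ = 10 ^ m := one_mul _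
    calc |∑ j ∈ range m, d j * 10 ^ j + d m * 10 ^ m|
        ≤ |∑ j ∈ range m, d j * 10 ^ j| + |d m * 10 ^ m| := abs_add_le _ _
      _ < 10 ^ m + 10 ^ m := add_lt_add_of_lt_of_le h1 h2
      _ ≤ 10 ^ (m + 1) := by
          have hpos : (0:ℤ) ≤ 10 ^ m := by positivity
          rw [pow_succ]; linarith

lemma digit_sum_zero (d : ℕ → ℤ) : ∀ m : ℕ, (∀ j < m, |d j| ≤ 1) →
    (∑ j ∈ range m, d j * 10 ^ j = 0) → ∀ j < m, d j = 0 := by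
  intro m
  induction m with
  | zero => intro _ _ j hj; omega
  | succ m ih =>
    intro hd h
    rw [sum_range_succ] at h
    have hb : |∑ j ∈ range m, d j * 10 ^ j| < 10 ^ m :=
      digit_sum_bound d m (fun j hj => hd j (by omega))
    have hdm : d m = 0 := by
      by_contra hne
      have h1 : (1:ℤ) ≤ |d m| := Int.one_le_abs hne
      have h2 : (10:ℤ) ^ m ≤ |d m * 10 ^ m| := by
        rw [abs_mul, abs_pow]
        have h10 : |(10:ℤ)| = 10 := by norm_num
        rw [h10]
        calc (10:ℤ) ^ m = 1 * 10 ^ m := (one_mul _).symm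
          _ ≤ |d m| * 10 ^ m := mul_le_mul_of_nonneg_right h1 (by positivity)
      have h3 : d m * 10 ^ m = -∑ j ∈ range m, d j * 10 ^ j := by linarith
      rw [h3, abs_neg] at h2
      omega
    have hs : ∑ j ∈ range m, d j * 10 ^ j = 0 := by
      rw [hdm] at h; simpa using h
    intro j hj
    rcases Nat.lt_succ_iff_lt_or_eq.mp hj with h' | h'
    · exact ih (fun j hj => hd j (by omega)) hs j h'
    · rw [h']; exact hdm

/-- Let `n = 2k` with `k ≥ 1`, and define the positional encoding
`p : {1, …, n} × {0,1} → ℝ` by `p(i, x) = 10^{1-i} · x` for `i ∈ {1, …, k}` and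
`p(i, x) = -10^{i-n} · x` for `i ∈ {k+1, …, n}` (0-indexed below: position `i : Fin n`
stands for `1`-indexed position `i + 1`, so the coefficients are `10^{-i}` for `i < k`
and `-10^{i+1-n}` otherwise).  Then for every input `x ∈ {0,1}^n`, the uniform average
`(1/n) Σ_i p(i, x_i)` equals `(1/n) Σ_{j=1}^k 10^{1-j} (x_j - x_{n+1-j})`; consequently
this average is `0` if and only if `x` is a palindrome, i.e. `x_i = x_{n+1-i}` for all
`i` (0-indexed: `x i = x i.rev`). -/
theorem palindrome_positional_encoding
    (k n : ℕ) (hk : 1 ≤ k) (hn : n = 2 * k)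
    (p : Fin n → Fin 2 → ℝ)
    (hp : ∀ (i : Fin n) (x : Fin 2),
      p i x = if (i : ℕ) < k then (10 : ℝ) ^ (-((i : ℕ) : ℤ)) * ((x : ℕ) : ℝ)
        else -((10 : ℝ) ^ (((i : ℕ) : ℤ) + 1 - (n : ℤ)) * ((x : ℕ) : ℝ)))
    (x : Fin n → Fin 2) :
    ((1 / n : ℝ) * ∑ i, p i (x i) =
      (1 / n : ℝ) * ∑ j : Fin k, (10 : ℝ) ^ (-((j : ℕ) : ℤ)) *
        (((x ⟨(j : ℕ), by have := j.isLt; omega⟩ : ℕ) : ℝ) -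
          ((x ⟨n - 1 - (j : ℕ), by have := j.isLt; omega⟩ : ℕ) : ℝ))) ∧
    ((1 / n : ℝ) * ∑ i, p i (x i) = 0 ↔ ∀ i : Fin n, x i = x i.rev) := by
  have hlt1 : ∀ j, j < k → j < n := by omega
  have hlt2 : ∀ j, j < k → n - 1 - j < n := by omega
  have hn0 : (n:ℝ) ≠ 0 := Nat.cast_ne_zero.mpr (by omega)
  set f : ℕ → ℝ := fun i => if h : i < n then p ⟨i, h⟩ (x ⟨i, h⟩) else 0 with hf
  set g : ℕ → ℝ := fun j => if h : j < k then
      (10:ℝ) ^ (-(j:ℤ)) * (((x ⟨j, hlt1 j h⟩ : ℕ):ℝ) - ((x ⟨n-1-j, hlt2 j h⟩ : ℕ):ℝ))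
    else 0 with hg
  have hA : ∑ i, p i (x i) = ∑ i ∈ range n, f i := by
    rw [← Fin.sum_univ_eq_sum_range f n]
    apply Finset.sum_congr rfl
    intro i _
    simp only [hf]
    rw [dif_pos i.isLt]
  have hC : ∑ i ∈ range n, f i = ∑ j ∈ range k, g j := by
    have hsplit : ∑ i ∈ range n, f i
        = ∑ i ∈ range k, f i + ∑ i ∈ range k, f (k + i) := by
      rw [hn, two_mul, Finset.sum_range_add]
    rw [hsplit, ← Finset.sum_range_reflect (fun i => f (k + i)) k,
      ← Finset.sum_add_distrib]
    apply Finset.sum_congr rfl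
    intro j hj
    rw [Finset.mem_range] at hj
    have e1 : k + (k - 1 - j) = n - 1 - j := by omega
    simp only [e1]
    simp only [hf, hg, dif_pos (hlt1 j hj), dif_pos (hlt2 j hj), dif_pos hj]
    rw [hp, hp]
    rw [if_pos (by simpa using hj), if_neg (by simp; omega)]
    have e2 : ((n-1-j:ℕ):ℤ) + 1 - (n:ℤ) = -(j:ℤ) := by omega
    simp only [e2]
    ring
  have hB : (∑ j : Fin k, (10 : ℝ) ^ (-((j : ℕ) : ℤ)) *
      (((x ⟨(j : ℕ), by have := j.isLt; omega⟩ : ℕ) : ℝ) -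
        ((x ⟨n - 1 - (j : ℕ), by have := j.isLt; omega⟩ : ℕ) : ℝ)))
      = ∑ j ∈ range k, g j := by
    rw [← Fin.sum_univ_eq_sum_range g k]
    apply Finset.sum_congr rfl
    intro j _
    simp only [hg, dif_pos j.isLt]
  constructor
  · rw [hA, hC, hB]
  · rw [hA, hC]
    have hsum0 : (1 / (n:ℝ)) * ∑ j ∈ range k, g j = 0 ↔ ∑ j ∈ range k, g j = 0 := by
      rw [mul_eq_zero]
      simp [hn0]
    rw [hsum0]
    -- palindrome characterization
    have hrev : ∀ (i : Fin n), (i.rev : ℕ) = n - 1 - (i:ℕ) := by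
      intro i; rw [Fin.val_rev]; omega
    have hpalk : (∀ j (h : j < k), x ⟨j, hlt1 j h⟩ = x ⟨n-1-j, hlt2 j h⟩) ↔
        (∀ i : Fin n, x i = x i.rev) := by
      constructor
      · intro hpal i
        rcases lt_or_ge (i:ℕ) k with hik | hik
        · have h1 : i = ⟨(i:ℕ), hlt1 _ hik⟩ := Fin.ext rfl
          have h2 : i.rev = ⟨n-1-(i:ℕ), hlt2 _ hik⟩ :=
            Fin.ext (by rw [hrev])
          calc x i = x ⟨(i:ℕ), hlt1 _ hik⟩ := congrArg x h1
            _ = x ⟨n-1-(i:ℕ), hlt2 _ hik⟩ := hpal _ hik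
            _ = x i.rev := (congrArg x h2).symm
        · have hik' : n - 1 - (i:ℕ) < k := by have := i.isLt; omega
          have h1 : i.rev = ⟨n-1-(i:ℕ), hlt1 _ hik'⟩ :=
            Fin.ext (by rw [hrev])
          have h2 : i = ⟨n-1-(n-1-(i:ℕ)), hlt2 _ hik'⟩ :=
            Fin.ext (by have := i.isLt; show (i:ℕ) = n-1-(n-1-(i:ℕ)); omega)
          calc x i = x ⟨n-1-(n-1-(i:ℕ)), hlt2 _ hik'⟩ := congrArg x h2
            _ = x ⟨n-1-(i:ℕ), hlt1 _ hik'⟩ := (hpal _ hik').symm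
            _ = x i.rev := (congrArg x h1).symm
      · intro hpal j h
        have h1 : (⟨j, hlt1 j h⟩ : Fin n).rev = ⟨n-1-j, hlt2 j h⟩ :=
          Fin.ext (by rw [hrev])
        rw [← h1]; exact hpal _
    rw [← hpalk]
    constructor
    · -- hard direction
      intro hz
      set d : ℕ → ℤ := fun j => if h : j < k then
          ((x ⟨j, hlt1 j h⟩ : ℕ):ℤ) - ((x ⟨n-1-j, hlt2 j h⟩ : ℕ):ℤ) else 0 with hd
      have hdb : ∀ j, |d j| ≤ 1 := by
        intro j
        simp only [hd]
        split
        · rename_i h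
          have b1 := (x ⟨j, hlt1 j h⟩).isLt
          have b2 := (x ⟨n-1-j, hlt2 j h⟩).isLt
          rw [abs_le]; omega
        · simp
      have hT : ∑ j ∈ range k, d (k-1-j) * 10 ^ j = 0 := by
        have hrefl : ∑ j ∈ range k, (fun j => d (k-1-j) * 10 ^ j) (k-1-j)
            = ∑ j ∈ range k, d (k-1-j) * 10 ^ j :=
          Finset.sum_range_reflect (fun j => d (k-1-j) * 10 ^ j) k
        rw [← hrefl]
        have hcast : ((∑ j ∈ range k, (fun j => d (k-1-j) * 10 ^ j) (k-1-j)) : ℤ)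
            = 0 := by
          have key : ((∑ j ∈ range k, (fun j => d (k-1-j) * 10 ^ j) (k-1-j) : ℤ) : ℝ)
              = (10:ℝ) ^ (k-1:ℕ) * ∑ j ∈ range k, g j := by
            push_cast
            rw [Finset.mul_sum]
            apply Finset.sum_congr rfl
            intro j hj
            rw [Finset.mem_range] at hj
            have e3 : k - 1 - (k - 1 - j) = j := by omega
            simp only [e3, hd, hg, dif_pos hj]
            push_cast
            have e4 : (10:ℝ) ^ (k-1:ℕ) * ((10:ℝ) ^ (-(j:ℤ)) *
                (((x ⟨j, hlt1 j hj⟩ : ℕ):ℝ) - ((x ⟨n-1-j, hlt2 j hj⟩ : ℕ):ℝ)))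
                = (10:ℝ) ^ ((k-1-j:ℕ):ℤ) *
                (((x ⟨j, hlt1 j hj⟩ : ℕ):ℝ) - ((x ⟨n-1-j, hlt2 j hj⟩ : ℕ):ℝ)) := by
              rw [← mul_assoc]
              congr 1
              rw [← zpow_natCast (10:ℝ) (k-1), ← zpow_add₀ (by norm_num : (10:ℝ) ≠ 0)]
              congr 1
              omega
            rw [e4, zpow_natCast]
            ring
          rw [hz, mul_zero] at key
          exact_mod_cast key
        exact hcast
      have hall := digit_sum_zero (fun j => d (k-1-j)) k
        (fun j _ => hdb (k-1-j)) hT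
      intro j hj
      have hj' : k - 1 - j < k := by omega
      have hthis : d (k - 1 - (k-1-j)) = 0 := hall (k-1-j) hj'
      have e5 : k - 1 - (k-1-j) = j := by omega
      rw [e5] at hthis
      simp only [hd, dif_pos hj] at hthis
      have hval : (x ⟨j, hlt1 j hj⟩ : ℕ) = (x ⟨n-1-j, hlt2 j hj⟩ : ℕ) := by omega
      exact Fin.ext hval
    · intro hpal
      apply Finset.sum_eq_zero
      intro j hj
      rw [Finset.mem_range] at hj
      simp only [hg, dif_pos hj, hpal j hj]
      ring
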